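/- Let n be a nonnegative integer and define T_n(a,b,c) = (1+a−c)_n (c)_n · _4F_3(−n, a/2, (a+1)/2, b ; a, 1+a−c, c ; 4), and U_n(x,y,z) = T_n( x−y−z, (1+3x−y−z−2n)/2, (1+x+y−3z)/2 ). Let x, y, z ∈ ℂ and assume that for every permutation (x',y',z') of (x,y,z), setting a' = x'−y'−z' and c' = (1+x'+y'−3z')/2, the rising factorials (a')_n, (1+a'−c')_n, and (c')_n are all nonzero. Then U_n(x,y,z) is invariant under all six permutations of (x,y,z); that is, U_n(x,y,z) = U_n(x,z,y) = U_n(y,x,z) = U_n(y,z,x) = U_n(z,x,y) = U_n(z,y,x). -/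

import Mathlib

open Finset

/-- The rising factorial (Pochhammer symbol) `(a)_k = a(a+1)⋯(a+k-1)`. -/
noncomputable def poch (a : ℂ) (k : ℕ) : ℂ := ∏ i ∈ Finset.range k, (a + i)

/-- `T n a b c = (1+a-c)_n (c)_n · ₄F₃(-n, a/2, (a+1)/2, b ; a, 1+a-c, c ; 4)`. -/
noncomputable def T (n : ℕ) (a b c : ℂ) : ℂ :=
  poch (1 + a - c) n * poch c n *
    ∑ k ∈ Finset.range (n + 1),
      (poch (-(n : ℂ)) k * poch (a / 2) k * poch ((a + 1) / 2) k * poch b k) /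
        ((Nat.factorial k : ℂ) * poch a k * poch (1 + a - c) k * poch c k) * (4 : ℂ) ^ k

/-- `U n x y z = T n (x-y-z) ((1+3x-y-z-2n)/2) ((1+x+y-3z)/2)`. -/
noncomputable def U (n : ℕ) (x y z : ℂ) : ℂ :=
  T n (x - y - z) ((1 + 3 * x - y - z - 2 * (n : ℂ)) / 2) ((1 + x + y - 3 * z) / 2)

/-!
Put `v = ((1 + y + z - 3x)/2, (1 + x + z - 3y)/2, (1 + x + y - 3z)/2)`. Then the parameters of
`U_n(x, y, z)` are `a = v₁ + v₂ - 1`, `1 + a - c = v₁`, `c = v₂` and `1 - b - k = v₀ + n - k`.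
Clearing the denominators of the `₄F₃` and using `(a/2)_k ((a+1)/2)_k 4^k = (a)_{2k}` gives
`U_n = Σ_k C(n,k) (v₀ + n - k)_k (v₁ + v₂ - 1 + k)_k (v₁ + k)_{n-k} (v₂ + k)_{n-k}`.
Expanding `(v₁ + v₂ - 1 + k)_k` by Chu–Vandermonde turns this into the trinomial sum
`Σ_{t₀+t₁+t₂=n} n!/(t₀! t₁! t₂!) ∏ᵢ (vᵢ + tᵢ)_{n-tᵢ}`, which is symmetric in `v`; permuting
`(x, y, z)` permutes `v`.
-/

lemma poch_eq_eval (a : ℂ) (k : ℕ) : poch a k = (ascPochhammer ℂ k).eval a := by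
  induction k with
  | zero => simp [poch]
  | succ k ih => rw [poch, prod_range_succ, ← poch, ih, ascPochhammer_succ_eval]

lemma poch_add (a : ℂ) (m k : ℕ) : poch a (m + k) = poch a m * poch (a + m) k := by
  simp only [poch, prod_range_add, Nat.cast_add, add_assoc]

lemma poch_ne_zero_of_le {a : ℂ} {k n : ℕ} (h : poch a n ≠ 0) (hk : k ≤ n) : poch a k ≠ 0 := by
  obtain ⟨m, rfl⟩ := Nat.exists_eq_add_of_le hk
  exact left_ne_zero_of_mul (poch_add a k m ▸ h)

lemma poch_two_mul (a : ℂ) (k : ℕ) :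
    poch a (2 * k) = poch (a / 2) k * poch ((a + 1) / 2) k * 4 ^ k := by
  induction k with
  | zero => simp [poch]
  | succ k ih =>
    rw [Nat.mul_succ, poch_add a (2 * k) 2, ih]
    simp only [poch, prod_range_succ, prod_range_zero]
    push_cast; ring

lemma poch_one_sub_sub (b : ℂ) (k : ℕ) : poch (1 - b - k) k = (-1) ^ k * poch b k := by
  rw [poch_eq_eval, show 1 - b - k = -(b + k - 1) by ring, ascPochhammer_eval_neg_eq_descPochhammer,
    descPochhammer_eval_eq_ascPochhammer, poch_eq_eval]
  ring_nf

lemma poch_neg_natCast (n k : ℕ) : poch (-n) k = (-1) ^ k * (k.factorial * n.choose k) := by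
  rw [poch_eq_eval, ascPochhammer_eval_neg_eq_descPochhammer, descPochhammer_eval_eq_descFactorial,
    Nat.descFactorial_eq_factorial_mul_choose, Nat.cast_mul]

lemma descPochhammer_smeval_eq_poch (r : ℂ) (k : ℕ) :
    (descPochhammer ℤ k).smeval r = poch (r - k + 1) k := by
  rw [Polynomial.descPochhammer_smeval_eq_ascPochhammer, Polynomial.ascPochhammer_smeval_eq_eval,
    poch_eq_eval]

-- Chu–Vandermonde for falling factorials: `poch (β + i) j` is the falling factorial of
-- `β + m - 1` of length `j` when `i + j = m`.
lemma poch_vandermonde (β γ : ℂ) (m : ℕ) :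
    poch (β + γ - 1 + m) m =
      ∑ ij ∈ antidiagonal m, (m.choose ij.1 : ℂ) * poch (β + ij.1) ij.2 * poch (γ + ij.2) ij.1 := by
  have h := Ring.descPochhammer_smeval_add (r := γ + m - 1) (s := β + m - 1) m (Commute.all _ _)
  simp only [descPochhammer_smeval_eq_poch] at h
  rw [show β + γ - 1 + m = γ + m - 1 + (β + m - 1) - m + 1 by ring, h]
  refine sum_congr rfl fun ij hij => ?_
  obtain rfl : ij.1 + ij.2 = m := mem_antidiagonal.1 hij
  push_cast
  ring_nf

lemma poch_vandermonde_mul {n l m : ℕ} (h : l + m = n) (β γ : ℂ) :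
    poch (β + γ - 1 + m) m * poch (β + m) l * poch (γ + m) l =
      ∑ q ∈ antidiagonal m,
        (m.choose q.1 : ℂ) * poch (β + q.1) (n - q.1) * poch (γ + q.2) (n - q.2) := by
  rw [poch_vandermonde, sum_mul, sum_mul]
  refine sum_congr rfl fun q hq => ?_
  obtain rfl : q.1 + q.2 = m := mem_antidiagonal.1 hq
  rw [show n - q.1 = q.2 + l by omega, show n - q.2 = q.1 + l by omega, poch_add, poch_add]
  push_cast
  ring_nf

lemma T_summand_eq {n l k : ℕ} (h : l + k = n) {a c : ℂ} (b : ℂ) (ha : poch a k ≠ 0)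
    (hac : poch (1 + a - c) k ≠ 0) (hc : poch c k ≠ 0) :
    poch (1 + a - c) n * poch c n *
        ((poch (-(n : ℂ)) k * poch (a / 2) k * poch ((a + 1) / 2) k * poch b k) /
          ((k.factorial : ℂ) * poch a k * poch (1 + a - c) k * poch c k) * 4 ^ k) =
      n.choose l * poch (1 - b - k) k * poch (a + k) k * poch (1 + a - c + k) l *
        poch (c + k) l := by
  have hsplit : ∀ d, poch d n = poch d k * poch (d + k) l := fun d => by
    rw [← poch_add, ← h, add_comm]
  have hdup : poch (a / 2) k * poch ((a + 1) / 2) k * 4 ^ k = poch a k * poch (a + k) k := by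
    rw [← poch_two_mul, two_mul, poch_add]
  have hfac : (k.factorial : ℂ) ≠ 0 := by exact_mod_cast k.factorial_ne_zero
  rw [hsplit, hsplit c, poch_neg_natCast, poch_one_sub_sub, Nat.choose_symm_of_eq_add h.symm]
  field_simp
  linear_combination n.choose k * poch b k * poch (1 + a - c + k) l * poch (c + k) l * hdup

theorem T_eq_sum (n : ℕ) {a c : ℂ} (b : ℂ) (ha : poch a n ≠ 0) (hac : poch (1 + a - c) n ≠ 0)
    (hc : poch c n ≠ 0) :
    T n a b c = ∑ p ∈ antidiagonal n, n.choose p.1 * poch (1 - b - p.2) p.2 *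
      poch (a + p.2) p.2 * poch (1 + a - c + p.2) p.1 * poch (c + p.2) p.1 := by
  rw [T, mul_sum, ← Nat.sum_antidiagonal_swap, Nat.sum_antidiagonal_eq_sum_range_succ_mk]
  refine sum_congr rfl fun k hk => ?_
  have hk : k ≤ n := Nat.lt_succ_iff.1 (mem_range.1 hk)
  exact T_summand_eq (Nat.sub_add_cancel hk) b (poch_ne_zero_of_le ha hk)
    (poch_ne_zero_of_le hac hk) (poch_ne_zero_of_le hc hk)

theorem Finset.Nat.sum_antidiagonalTuple_succ {M : Type*} [AddCommMonoid M] (k n : ℕ)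
    (f : (Fin (k + 1) → ℕ) → M) :
    ∑ t ∈ Nat.antidiagonalTuple (k + 1) n, f t =
      ∑ p ∈ antidiagonal n, ∑ t ∈ Nat.antidiagonalTuple k p.2, f (Fin.cons p.1 t) := by
  rw [sum_sigma']
  refine sum_nbij' (fun t => ⟨(t 0, n - t 0), Fin.tail t⟩) (fun s => Fin.cons s.1.1 s.2)
    ?_ ?_ ?_ ?_ fun t _ => congrArg f (Fin.cons_self_tail t).symm
  · intro t ht
    rw [Nat.mem_antidiagonalTuple, Fin.sum_univ_succ] at ht
    simp only [mem_sigma, HasAntidiagonal.mem_antidiagonal, Nat.mem_antidiagonalTuple]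
    exact ⟨by omega, by simp only [Fin.tail]; omega⟩
  · rintro ⟨p, t⟩ hs
    simp only [mem_sigma, HasAntidiagonal.mem_antidiagonal,
      Nat.mem_antidiagonalTuple] at hs ⊢
    rw [Fin.sum_univ_succ]
    simpa [hs.2] using hs.1
  · intro t _
    simp
  · rintro ⟨p, t⟩ hs
    simp only [mem_sigma, HasAntidiagonal.mem_antidiagonal] at hs
    simp [← hs.1]

lemma Nat.multinomial_univ_three_eq_choose_mul_choose (l i j : ℕ) :
    Nat.multinomial univ ![l, i, j] = (l + i + j).choose l * (i + j).choose i := by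
  have hspec := Nat.multinomial_spec univ ![l, i, j]
  simp only [Fin.prod_univ_three, Fin.sum_univ_three, Matrix.cons_val] at hspec
  refine Nat.eq_of_mul_eq_mul_left (by positivity : 0 < l.factorial * i.factorial * j.factorial) ?_
  rw [hspec, add_assoc, ← Nat.add_choose_mul_factorial_mul_factorial l (i + j),
    ← Nat.add_choose_mul_factorial_mul_factorial i j, ← Nat.choose_symm_add,
    ← Nat.choose_symm_add]
  ring

noncomputable def symSum {k : ℕ} (n : ℕ) (v : Fin k → ℂ) : ℂ :=
  ∑ t ∈ Nat.antidiagonalTuple k n, (Nat.multinomial univ t : ℂ) * ∏ i, poch (v i + t i) (n - t i)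

lemma symSum_comp_perm {k : ℕ} (n : ℕ) (v : Fin k → ℂ) (σ : Equiv.Perm (Fin k)) :
    symSum n (v ∘ σ) = symSum n v := by
  refine sum_nbij' (· ∘ σ.symm) (· ∘ σ) ?_ ?_ ?_ ?_ ?_
  · intro t ht
    simp only [Nat.mem_antidiagonalTuple] at ht ⊢
    rw [← ht]
    exact Equiv.sum_comp σ.symm t
  · intro t ht
    simp only [Nat.mem_antidiagonalTuple] at ht ⊢
    rw [← ht]
    exact Equiv.sum_comp σ t
  · intro t _; ext i; simp
  · intro t _; ext i; simp
  · intro t _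
    congr 1
    · simp only [Nat.multinomial]
      rw [← Equiv.sum_comp σ.symm, ← Equiv.prod_comp σ.symm]
      rfl
    · rw [← Equiv.prod_comp σ.symm]
      simp

lemma symSum_three (n : ℕ) (α β γ : ℂ) :
    symSum n ![α, β, γ] =
      ∑ p ∈ antidiagonal n, n.choose p.1 * poch (α + p.1) (n - p.1) *
        ∑ q ∈ antidiagonal p.2,
          p.2.choose q.1 * poch (β + q.1) (n - q.1) * poch (γ + q.2) (n - q.2) := by
  simp only [symSum, Nat.sum_antidiagonalTuple_succ, Nat.antidiagonalTuple_one, mul_sum]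
  refine sum_congr rfl fun p hp => sum_congr rfl fun q hq => ?_
  obtain rfl : p.1 + p.2 = n := HasAntidiagonal.mem_antidiagonal.1 hp
  have hq : q.1 + q.2 = p.2 := HasAntidiagonal.mem_antidiagonal.1 hq
  rw [sum_singleton,
    show (Fin.cons p.1 (Fin.cons q.1 ![q.2]) : Fin 3 → ℕ) = ![p.1, q.1, q.2] from rfl,
    Nat.multinomial_univ_three_eq_choose_mul_choose, Fin.prod_univ_three, add_assoc, hq]
  simp only [Matrix.cons_val, Nat.cast_mul]
  ring

def Admissible (n : ℕ) (x y z : ℂ) : Prop :=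
  poch (x - y - z) n ≠ 0 ∧ poch (1 + (x - y - z) - (1 + x + y - 3 * z) / 2) n ≠ 0 ∧
    poch ((1 + x + y - 3 * z) / 2) n ≠ 0

theorem U_eq_symSum {n : ℕ} {x y z : ℂ} (h : Admissible n x y z) :
    U n x y z = symSum n ![(1 + y + z - 3 * x) / 2, (1 + x + z - 3 * y) / 2,
      (1 + x + y - 3 * z) / 2] := by
  obtain ⟨ha, hac, hc⟩ := h
  rw [U, T_eq_sum n _ ha hac hc, symSum_three]
  refine sum_congr rfl fun p hp => ?_
  have hn := mem_antidiagonal.1 hp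
  rw [← poch_vandermonde_mul hn]
  have hn' : (p.1 : ℂ) + p.2 = n := by exact_mod_cast hn
  have hb : 1 - (1 + 3 * x - y - z - 2 * n) / 2 - p.2 = (1 + y + z - 3 * x) / 2 + p.1 := by
    linear_combination -hn'
  have hac' : 1 + (x - y - z) - (1 + x + y - 3 * z) / 2 = (1 + x + z - 3 * y) / 2 := by ring
  have ha' : x - y - z = (1 + x + z - 3 * y) / 2 + (1 + x + y - 3 * z) / 2 - 1 := by ring
  rw [hb, hac', ha', show n - p.1 = p.2 by omega]
  ring

theorem U_swap₁₂ {n : ℕ} {x y z : ℂ} (h : Admissible n x y z) (h' : Admissible n y x z) :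
    U n x y z = U n y x z := by
  rw [U_eq_symSum h, U_eq_symSum h', ← symSum_comp_perm n _ (Equiv.swap 0 1)]
  congr 1
  ext i
  fin_cases i <;> simp [Equiv.swap_apply_def, add_right_comm]

theorem U_swap₂₃ {n : ℕ} {x y z : ℂ} (h : Admissible n x y z) (h' : Admissible n x z y) :
    U n x y z = U n x z y := by
  rw [U_eq_symSum h, U_eq_symSum h', ← symSum_comp_perm n _ (Equiv.swap 1 2)]
  congr 1
  ext i
  fin_cases i <;> simp [Equiv.swap_apply_def, add_right_comm]

theorem stmt_6 (n : ℕ) (x y z : ℂ)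
    (h : ∀ p : ℂ × ℂ × ℂ,
      p ∈ ({(x, y, z), (x, z, y), (y, x, z), (y, z, x), (z, x, y), (z, y, x)} :
        Set (ℂ × ℂ × ℂ)) →
      poch (p.1 - p.2.1 - p.2.2) n ≠ 0 ∧
      poch (1 + (p.1 - p.2.1 - p.2.2) - (1 + p.1 + p.2.1 - 3 * p.2.2) / 2) n ≠ 0 ∧
      poch ((1 + p.1 + p.2.1 - 3 * p.2.2) / 2) n ≠ 0) :
    U n x y z = U n x z y ∧ U n x y z = U n y x z ∧ U n x y z = U n y z x ∧
      U n x y z = U n z x y ∧ U n x y z = U n z y x := by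
  have hxyz : Admissible n x y z := h (x, y, z) (by simp)
  have hxzy : Admissible n x z y := h (x, z, y) (by simp)
  have hyxz : Admissible n y x z := h (y, x, z) (by simp)
  have hyzx : Admissible n y z x := h (y, z, x) (by simp)
  have hzxy : Admissible n z x y := h (z, x, y) (by simp)
  have hzyx : Admissible n z y x := h (z, y, x) (by simp)
  have hyzx_eq : U n x y z = U n y z x := (U_swap₁₂ hxyz hyxz).trans (U_swap₂₃ hyxz hyzx)
  exact ⟨U_swap₂₃ hxyz hxzy, U_swap₁₂ hxyz hyxz, hyzx_eq,
    (U_swap₂₃ hxyz hxzy).trans (U_swap₁₂ hxzy hzxy),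
    hyzx_eq.trans (U_swap₁₂ hyzx hzyx)⟩
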